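/- Let d, k, n ≥ 2. For ℓ = n, n+1, …, nk set W_ℓ = ⋃_{j_1+⋯+j_n=ℓ} A_{j_1} × ⋯ × A_{j_n} ⊆ F(ℝ^d,k)^n. Then the sets W_n, …, W_{nk} are pairwise disjoint, their union is all of F(ℝ^d,k)^n, and each W_ℓ admits a continuous section of the evaluation map e_n : P(F(ℝ^d,k)) → F(ℝ^d,k)^n. In particular, F(ℝ^d,k)^n can be partitioned into n(k−1)+1 subsets, each admitting a continuous n-th sequential motion planning algorithm. -/

import Mathlib

open unitInterval

noncomputable section

/-- Euclidean space ℝ^d. -/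
abbrev E (d : ℕ) : Type := EuclideanSpace ℝ (Fin d)

/-- The ordered configuration space F(ℝ^d, k) of k distinct points in ℝ^d,
viewed as the subspace of (ℝ^d)^k of injective tuples. -/
def Conf (d k : ℕ) : Set (Fin k → E d) := {x | Function.Injective x}

/-- The time i/(n-1) ∈ [0,1] at which the i-th configuration is visited. -/
def eTime (n : ℕ) (i : Fin n) : unitInterval :=
  Set.projIcc 0 1 zero_le_one ((i : ℝ) / ((n : ℝ) - 1))

/-- The evaluation map e_n : P(X) → X^n,
e_n(γ) = (γ(0), γ(1/(n-1)), …, γ((n-2)/(n-1)), γ(1)). -/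
def evalMap {X : Type*} [TopologicalSpace X] (n : ℕ) (γ : C(unitInterval, X)) : Fin n → X :=
  fun i => γ (eTime n i)

/-- `A ⊆ X^n` admits a continuous section of the evaluation map e_n. -/
def HasSec {X : Type*} [TopologicalSpace X] (n : ℕ) (A : Set (Fin n → X)) : Prop :=
  ∃ s : A → C(unitInterval, X), Continuous s ∧ ∀ a : A, evalMap n (s a) = (a : Fin n → X)

/-- The projection p : ℝ^d → ℝ^d onto the first coordinate axis. -/
def projL {d : ℕ} (x : E d) : E d :=
  (WithLp.equiv 2 (Fin d → ℝ)).symm fun j => if (j : ℕ) = 0 then x j else 0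

/-- cp(C) = cardinality of {p(x_1),…,p(x_k)}. -/
def cp {d k : ℕ} (C : Fin k → E d) : ℕ := (Set.range fun i => projL (C i)).ncard

/-- The product A_{j_1} × ⋯ × A_{j_n} ⊆ F(ℝ^d,k)^n. -/
def Aprod (d k n : ℕ) (jv : Fin n → ℕ) : Set (Fin n → ↥(Conf d k)) :=
  {C | ∀ s : Fin n, cp ((C s : Fin k → E d)) = jv s}

/-- W_ℓ = ⋃_{j_1+⋯+j_n=ℓ} A_{j_1} × ⋯ × A_{j_n}, the indices j_s ranging over
{1,…,k}. -/
def Wset (d k n ℓ : ℕ) : Set (Fin n → ↥(Conf d k)) :=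
  ⋃ (jv : Fin n → ℕ) (_ : (∀ s, 1 ≤ jv s ∧ jv s ≤ k) ∧ (∑ s, jv s) = ℓ),
    Aprod d k n jv

/-!
Between consecutive configurations `C s` and `C (s + 1)` the path runs along five straight
segments, each staying inside the configuration space. First, the points of `C s` sharing a first
coordinate are pushed apart along the first axis, the `r`-th point of a class by `r` times
`g / (2k)`, where `g` is the least positive gap between first coordinates; these shifts stay below
`g / 2`, so all first coordinates become distinct. Next, point `i` is moved to height `i` along the
second axis, which is harmless once first coordinates are distinct. Then one slides straight to
the configuration obtained in the same way from `C (s + 1)`: all heights agree there. Finally the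
first two moves are undone for `C (s + 1)`.

This depends continuously on `C` once the coincidence pattern of the first coordinates is fixed.
On `W_ℓ` the pattern is locally constant: nearby configurations have at least as many distinct
first coordinates, and the sum of these counts is pinned at `ℓ`.
-/

open Function Topology

theorem continuous_finset_fold_min {X ι α : Type*} [TopologicalSpace X] [LinearOrder α]
    [TopologicalSpace α] [OrderClosedTopology α] (s : Finset ι) (b : α) {f : ι → X → α}
    (hf : ∀ i, Continuous (f i)) : Continuous fun x => s.fold min b fun i => f i x := by
  induction s using Finset.cons_induction with
  | empty => exact continuous_const
  | cons i s hi ih => simpa only [Finset.fold_cons] using (hf i).min ih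

theorem IsLocallyConstant.continuous_piecewise {X Y Z : Type*} [TopologicalSpace X]
    [TopologicalSpace Z] {π : X → Y} (hπ : IsLocallyConstant π) {G : Y → X → Z}
    (hG : ∀ y, Continuous (G y)) : Continuous fun x => G (π x) x :=
  continuous_iff_continuousAt.2 fun x => (hG (π x)).continuousAt.congr <| by
    filter_upwards [hπ.eventually_eq x] with y hy
    rw [hy]

namespace Function.FactorsThrough

variable {ι α β : Type*} [Finite ι] {f : ι → α} {g : ι → β}

theorem ncard_range_le (h : f.FactorsThrough g) :
    (Set.range f).ncard ≤ (Set.range g).ncard := by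
  rcases isEmpty_or_nonempty ι with _ | ⟨⟨i⟩⟩
  · simp [Set.range_eq_empty]
  · rw [← h.extend_comp fun _ => f i, Set.range_comp]
    exact Set.ncard_image_le (Set.finite_range g)

theorem symm_of_ncard_range_eq (h : f.FactorsThrough g)
    (heq : (Set.range f).ncard = (Set.range g).ncard) : g.FactorsThrough f := by
  rcases isEmpty_or_nonempty ι with _ | ⟨⟨i⟩⟩
  · exact fun a => isEmptyElim a
  · rw [← h.extend_comp fun _ => f i, Set.range_comp] at heq
    intro a b hab
    refine Set.injOn_of_ncard_image_eq heq (Set.finite_range g)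
      (Set.mem_range_self a) (Set.mem_range_self b) ?_
    simpa only [h.extend_apply] using hab

end Function.FactorsThrough

theorem eventually_factorsThrough {X ι Y : Type*} [TopologicalSpace X] [TopologicalSpace Y]
    [T2Space Y] [Finite ι] {f : X → ι → Y} (hf : Continuous f) (x : X) :
    ∀ᶠ y in 𝓝 x, (f x).FactorsThrough (f y) := by
  refine Filter.eventually_all.2 fun a => Filter.eventually_all.2 fun b => ?_
  by_cases hab : f x a = f x b
  · exact Filter.Eventually.of_forall fun _ _ => hab
  · filter_upwards [(isOpen_ne_fun ((continuous_apply a).comp hf)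
      ((continuous_apply b).comp hf)).mem_nhds hab] with y hne h
    exact absurd h hne

theorem isLocallyConstant_ker_of_sum_ncard_range_eq {X κ ι Y : Type*} [TopologicalSpace X]
    [TopologicalSpace Y] [T2Space Y] [Fintype κ] [Finite ι] {f : X → κ → ι → Y}
    (hf : Continuous f) (ℓ : ℕ) :
    IsLocallyConstant fun x : {x | ∑ s, (Set.range (f x s)).ncard = ℓ} =>
      fun s => Setoid.ker (f x s) := by
  refine (IsLocallyConstant.iff_eventually_eq _).2 fun x => ?_
  have hrefine := Filter.eventually_all.2 fun s => eventually_factorsThrough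
    ((continuous_apply s).comp (hf.comp continuous_subtype_val)) x
  filter_upwards [hrefine] with y hy
  have hcard : ∀ s, (Set.range (f x s)).ncard = (Set.range (f y s)).ncard :=
    fun s => (Finset.sum_eq_sum_iff_of_le fun s _ => (hy s).ncard_range_le).1
      (x.2.trans y.2.symm) s (Finset.mem_univ s)
  funext s
  exact Setoid.ext fun _ _ =>
    ⟨fun h => hy s h, fun h => (hy s).symm_of_ncard_range_eq (hcard s) h⟩

section PolygonalPath

variable {V : Type*} [AddCommGroup V] [Module ℝ V]

/-- On `[q / N, (q + 1) / N]` only the `q`-th coefficient is strictly between `0` and `1`, so this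
is the segment from `F q` to `F (q + 1)` there (`polygonalPath_eq_lineMap`). -/
def polygonalPath (N : ℕ) (F : ℕ → V) (t : ℝ) : V :=
  F 0 + ∑ q ∈ Finset.range N,
    (Set.projIcc (0 : ℝ) 1 zero_le_one (N * t - q) : ℝ) • (F (q + 1) - F q)

theorem polygonalPath_eq_lineMap (F : ℕ → V) {N q : ℕ} (hq : q < N) {t : ℝ}
    (h₁ : q ≤ N * t) (h₂ : N * t ≤ q + 1) :
    polygonalPath N F t = AffineMap.lineMap (F q) (F (q + 1)) (N * t - q) := by
  have hbefore : ∀ q' ∈ Finset.range q,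
      (Set.projIcc (0 : ℝ) 1 zero_le_one (N * t - q') : ℝ) • (F (q' + 1) - F q') =
        F (q' + 1) - F q' := by
    intro q' hq'
    have : (q' : ℝ) + 1 ≤ q := by exact_mod_cast Finset.mem_range.1 hq'
    rw [Set.projIcc_of_right_le _ (by linarith), one_smul]
  have hafter : ∀ q' ∈ Finset.Ico (q + 1) N,
      (Set.projIcc (0 : ℝ) 1 zero_le_one (N * t - q') : ℝ) • (F (q' + 1) - F q') = 0 := by
    intro q' hq'
    have : (q : ℝ) + 1 ≤ q' := by exact_mod_cast (Finset.mem_Ico.1 hq').1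
    rw [Set.projIcc_of_le_left _ (by linarith)]
    exact zero_smul ℝ _
  rw [polygonalPath, ← Finset.sum_range_add_sum_Ico _ hq, Finset.sum_range_succ,
    Finset.sum_congr rfl hbefore, Finset.sum_congr rfl hafter, Finset.sum_range_sub,
    Set.projIcc_of_mem _ ⟨by linarith, by linarith⟩, AffineMap.lineMap_apply_module']
  simp only [Finset.sum_const_zero, add_zero]
  abel

theorem polygonalPath_natCast_div (F : ℕ → V) {N q : ℕ} (hq : q ≤ N) :
    polygonalPath N F (q / N) = F q := by
  rcases hq.lt_or_eq with hlt | rfl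
  · have hN : (N : ℝ) * (q / N) = q := by
      have : (N : ℝ) ≠ 0 := by exact_mod_cast (q.zero_le.trans_lt hlt).ne'
      field_simp
    rw [polygonalPath_eq_lineMap F hlt (by rw [hN]) (by rw [hN]; linarith), hN, sub_self,
      AffineMap.lineMap_apply_zero]
  · rcases Nat.eq_zero_or_pos q with rfl | hpos
    · simp [polygonalPath]
    · have hN : (q : ℝ) * (q / q) = ((q - 1 : ℕ) : ℝ) + 1 := by
        have : (q : ℝ) ≠ 0 := by positivity
        rw [Nat.cast_sub hpos]
        field_simp
        ring
      rw [polygonalPath_eq_lineMap F (Nat.sub_lt hpos one_pos) (by rw [hN]; linarith) hN.le,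
        hN, add_sub_cancel_left, AffineMap.lineMap_apply_one,
        Nat.sub_add_cancel (show 1 ≤ q from hpos)]

theorem exists_polygonalPath_eq_lineMap (F : ℕ → V) {N : ℕ} (hN : 0 < N) {t : ℝ}
    (ht : t ∈ Set.Icc 0 1) :
    ∃ q < N, ∃ v ∈ Set.Icc (0 : ℝ) 1,
      polygonalPath N F t = AffineMap.lineMap (F q) (F (q + 1)) v := by
  have hNt : 0 ≤ (N : ℝ) * t := mul_nonneg (Nat.cast_nonneg N) ht.1
  set q := min ⌊(N : ℝ) * t⌋₊ (N - 1)
  have h₁ : (q : ℝ) ≤ N * t :=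
    le_trans (by exact_mod_cast min_le_left _ _) (Nat.floor_le hNt)
  have h₂ : N * t ≤ (q : ℝ) + 1 := by
    rcases le_total ⌊(N : ℝ) * t⌋₊ (N - 1) with hle | hle
    · rw [show q = ⌊(N : ℝ) * t⌋₊ from min_eq_left hle]
      exact (Nat.lt_floor_add_one _).le
    · rw [show q = N - 1 from min_eq_right hle, Nat.cast_sub hN, Nat.cast_one, sub_add_cancel]
      exact mul_le_of_le_one_right (Nat.cast_nonneg N) ht.2
  exact ⟨q, by omega, _, ⟨by linarith, by linarith⟩,
    polygonalPath_eq_lineMap F (by omega) h₁ h₂⟩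

theorem continuous_polygonalPath [TopologicalSpace V] [IsTopologicalAddGroup V]
    [ContinuousSMul ℝ V] {Y : Type*} [TopologicalSpace Y] (N : ℕ) {F : ℕ → Y → V}
    (hF : ∀ q, Continuous (F q)) :
    Continuous fun p : Y × ℝ => polygonalPath N (fun q => F q p.1) p.2 := by
  unfold polygonalPath
  have := continuous_projIcc (a := (0 : ℝ)) (b := 1) (h := zero_le_one)
  fun_prop

end PolygonalPath

section SegmentInjective

variable {ι W : Type*} [AddCommGroup W] [Module ℝ W]

def SegmentInjective (a b : ι → W) : Prop :=
  ∀ w ∈ Set.Icc (0 : ℝ) 1, Injective (AffineMap.lineMap a b w : ι → W)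

theorem SegmentInjective.symm {a b : ι → W} (h : SegmentInjective a b) :
    SegmentInjective b a := fun w hw => by
  rw [← AffineMap.lineMap_apply_one_sub]
  exact h (1 - w) ⟨by linarith [hw.2], by linarith [hw.1]⟩

theorem injective_polygonalPath {F : ℕ → ι → W} {N : ℕ} (hN : 0 < N)
    (hF : ∀ q < N, SegmentInjective (F q) (F (q + 1))) {t : ℝ} (ht : t ∈ Set.Icc 0 1) :
    Injective (polygonalPath N F t) := by
  obtain ⟨q, hq, v, hv, heq⟩ := exists_polygonalPath_eq_lineMap F hN ht
  rw [heq]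
  exact hF q hq v hv

end SegmentInjective

theorem hasSec_of_continuous {X : Type*} [TopologicalSpace X] {n : ℕ} {A : Set (Fin n → X)}
    (H : C(A × unitInterval, X)) (hH : ∀ (a : A) i, H (a, eTime n i) = (a : Fin n → X) i) :
    HasSec n A :=
  ⟨ContinuousMap.curry H, (ContinuousMap.curry H).continuous, fun a => funext (hH a)⟩

theorem coe_eTime_succ (m : ℕ) (i : Fin (m + 1)) : (eTime (m + 1) i : ℝ) = (i : ℕ) / m := by
  have hi : ((i : ℕ) : ℝ) ≤ m := by exact_mod_cast Nat.lt_succ_iff.1 i.2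
  rw [eTime, Nat.cast_succ, add_sub_cancel_right,
    Set.projIcc_of_mem _ ⟨by positivity, div_le_one_of_le₀ hi (Nat.cast_nonneg m)⟩]

namespace Conf

variable {d k : ℕ}

theorem apply_add_smul_single (v : E d) (c : ℝ) (o j : Fin d) :
    (v + c • EuclideanSpace.single o (1 : ℝ)) j = v j + if j = o then c else 0 := by
  simp

def coordKer (o : Fin d) (x : Fin k → E d) : Setoid (Fin k) :=
  Setoid.ker fun i => x i o

open Classical in
def classRank (r : Setoid (Fin k)) (i : Fin k) : ℕ :=
  (Finset.univ.filter fun j => r j i ∧ j < i).card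

theorem classRank_lt (r : Setoid (Fin k)) (i : Fin k) : classRank r i < k := by
  classical
  calc classRank r i ≤ (Finset.Iio i).card :=
        Finset.card_le_card fun j hj => Finset.mem_Iio.2 (Finset.mem_filter.1 hj).2.2
    _ < k := by rw [Fin.card_Iio]; exact i.2

theorem classRank_lt_classRank (r : Setoid (Fin k)) {i j : Fin k} (hr : r i j) (hij : i < j) :
    classRank r i < classRank r j := by
  classical
  refine Finset.card_lt_card ((Finset.ssubset_iff_of_subset fun l hl => ?_).2 ⟨i, ?_, ?_⟩)
  · obtain ⟨-, hli, hlt⟩ := Finset.mem_filter.1 hl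
    exact Finset.mem_filter.2 ⟨Finset.mem_univ l, r.trans hli hr, hlt.trans hij⟩
  · exact Finset.mem_filter.2 ⟨Finset.mem_univ i, hr, hij⟩
  · exact fun hi => lt_irrefl i (Finset.mem_filter.1 hi).2.2

section Spread

variable (o : Fin d)

/- The coincidence pattern `r` is a separate argument because `coordKer o x` jumps as `x` moves;
for fixed `r` the constructions below are continuous in `x`. -/
open Classical in
def coordGap (r : Setoid (Fin k)) (x : Fin k → E d) : ℝ :=
  (Finset.univ.filter fun p : Fin k × Fin k => ¬ r p.1 p.2).fold min 1
    fun p => |x p.1 o - x p.2 o|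

def spreadShift (r : Setoid (Fin k)) (x : Fin k → E d) (i : Fin k) : ℝ :=
  coordGap o r x / (2 * k) * classRank r i

def spread (r : Setoid (Fin k)) (x : Fin k → E d) : Fin k → E d :=
  fun i => x i + spreadShift o r x i • EuclideanSpace.single o 1

theorem coordGap_pos (x : Fin k → E d) : 0 < coordGap o (coordKer o x) x := by
  classical
  exact (Finset.lt_fold_min _).2 ⟨one_pos, fun _ hp =>
    abs_pos.2 (sub_ne_zero.2 (Finset.mem_filter.1 hp).2)⟩

theorem coordGap_le (x : Fin k → E d) {i j : Fin k} (h : x i o ≠ x j o) :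
    coordGap o (coordKer o x) x ≤ |x i o - x j o| := by
  classical
  exact (Finset.fold_min_le _).2
    (Or.inr ⟨(i, j), Finset.mem_filter.2 ⟨Finset.mem_univ _, h⟩, le_rfl⟩)

theorem abs_mul_spreadShift_lt (x : Fin k → E d) {w : ℝ} (hw : w ∈ Set.Icc (0 : ℝ) 1)
    (i : Fin k) : |w * spreadShift o (coordKer o x) x i| < coordGap o (coordKer o x) x / 2 := by
  have hg := coordGap_pos o x
  have hk : (0 : ℝ) < k := by exact_mod_cast i.pos
  have hrank : (classRank (coordKer o x) i : ℝ) < k := by exact_mod_cast classRank_lt _ i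
  have hshift : 0 ≤ spreadShift o (coordKer o x) x i := by unfold spreadShift; positivity
  rw [abs_of_nonneg (mul_nonneg hw.1 hshift)]
  calc w * spreadShift o (coordKer o x) x i ≤ spreadShift o (coordKer o x) x i :=
        mul_le_of_le_one_left hshift hw.2
    _ < coordGap o (coordKer o x) x / (2 * k) * k := by unfold spreadShift; gcongr
    _ = coordGap o (coordKer o x) x / 2 := by field_simp

theorem coord_eq_of_add_eq {x : Fin k → E d} {a : Fin k → ℝ}
    (ha : ∀ i, |a i| < coordGap o (coordKer o x) x / 2) {i j : Fin k}
    (h : x i o + a i = x j o + a j) : x i o = x j o := by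
  by_contra hne
  have hdiff : |x i o - x j o| = |a j - a i| := by
    rw [show x i o - x j o = a j - a i by linarith]
  linarith [coordGap_le o x hne, abs_sub (a j) (a i), ha i, ha j]

theorem lineMap_spread_apply (x : Fin k → E d) (w : ℝ) (i : Fin k) :
    AffineMap.lineMap x (spread o (coordKer o x) x) w i =
      x i + (w * spreadShift o (coordKer o x) x i) • EuclideanSpace.single o 1 := by
  simp only [AffineMap.lineMap_apply_module', spread, Pi.add_apply, Pi.smul_apply,
    Pi.sub_apply, add_sub_cancel_left, smul_smul]
  abel

theorem segmentInjective_spread {x : Fin k → E d} (hx : Injective x) :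
    SegmentInjective x (spread o (coordKer o x) x) := by
  intro w hw i j hij
  simp only [lineMap_spread_apply] at hij
  have hcoord := congrArg (· o) hij
  simp only [apply_add_smul_single, ↓reduceIte] at hcoord
  have hxo := coord_eq_of_add_eq o (abs_mul_spreadShift_lt o x hw) hcoord
  rw [show w * spreadShift o (coordKer o x) x i = w * spreadShift o (coordKer o x) x j by
    linarith] at hij
  exact hx (add_right_cancel hij)

theorem injective_coord_spread (x : Fin k → E d) :
    Injective fun i => spread o (coordKer o x) x i o := by
  intro i j hij
  simp only [spread, apply_add_smul_single, ↓reduceIte] at hij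
  have hxo : x i o = x j o := coord_eq_of_add_eq o (a := spreadShift o (coordKer o x) x)
    (fun i => by simpa using abs_mul_spreadShift_lt o x ⟨zero_le_one, le_rfl⟩ i) hij
  have hrank : classRank (coordKer o x) i = classRank (coordKer o x) j := by
    have hshift : spreadShift o (coordKer o x) x i = spreadShift o (coordKer o x) x j := by
      linarith
    have hg : coordGap o (coordKer o x) x / (2 * k) ≠ 0 := by
      have := coordGap_pos o x
      have : (0 : ℝ) < k := by exact_mod_cast i.pos
      positivity
    exact_mod_cast mul_left_cancel₀ hg hshift
  rcases lt_trichotomy i j with h | h | h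
  · exact absurd hrank (classRank_lt_classRank _ hxo h).ne
  · exact h
  · exact absurd hrank (classRank_lt_classRank _ hxo.symm h).ne'

theorem continuous_coordGap (r : Setoid (Fin k)) :
    Continuous (coordGap o r : (Fin k → E d) → ℝ) :=
  continuous_finset_fold_min _ _ fun _ => by fun_prop

theorem continuous_spread (r : Setoid (Fin k)) :
    Continuous (spread o r : (Fin k → E d) → Fin k → E d) := by
  have := continuous_coordGap o r
  unfold spread spreadShift
  fun_prop

end Spread

theorem lineMap_apply_apply (a b : Fin k → E d) (w : ℝ) (i : Fin k) (j : Fin d) :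
    AffineMap.lineMap a b w i j = (1 - w) * a i j + w * b i j := by
  simp [AffineMap.lineMap_apply_module]

section Lift

variable (u : Fin d)

def lift (x : Fin k → E d) : Fin k → E d :=
  fun i => x i + (((i : ℕ) : ℝ) - x i u) • EuclideanSpace.single u 1

theorem lift_apply_self (x : Fin k → E d) (i : Fin k) : lift u x i u = (i : ℕ) := by
  simp [lift]

theorem lift_apply_of_ne {o : Fin d} (hou : o ≠ u) (x : Fin k → E d) (i : Fin k) :
    lift u x i o = x i o := by
  simp [lift, hou]

theorem segmentInjective_lift {o : Fin d} (hou : o ≠ u) {y : Fin k → E d}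
    (hy : Injective fun i => y i o) : SegmentInjective y (lift u y) := by
  intro w _ i j hij
  have hcoord := congrArg (fun v : E d => v o) hij
  simp only [lineMap_apply_apply, lift_apply_of_ne u hou] at hcoord
  exact hy (by linear_combination hcoord)

theorem segmentInjective_lift_lift (y z : Fin k → E d) :
    SegmentInjective (lift u y) (lift u z) := by
  intro w _ i j hij
  have hcoord := congrArg (fun v : E d => v u) hij
  simp only [lineMap_apply_apply, lift_apply_self] at hcoord
  exact Fin.ext (by exact_mod_cast (by linear_combination hcoord : ((i : ℕ) : ℝ) = (j : ℕ)))

theorem continuous_lift : Continuous (lift u : (Fin k → E d) → Fin k → E d) := by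
  unfold lift
  fun_prop

end Lift

section Path

variable (o u : Fin d)

def legVertex (x y : Fin k → E d) (rx ry : Setoid (Fin k)) : ℕ → Fin k → E d
  | 0 => x
  | 1 => spread o rx x
  | 2 => lift u (spread o rx x)
  | 3 => lift u (spread o ry y)
  | _ => spread o ry y

def pathVertex (C : ℕ → Fin k → E d) (r : ℕ → Setoid (Fin k)) (q : ℕ) : Fin k → E d :=
  legVertex o u (C (q / 5)) (C (q / 5 + 1)) (r (q / 5)) (r (q / 5 + 1)) (q % 5)

def configPath (N : ℕ) (C : ℕ → Fin k → E d) (r : ℕ → Setoid (Fin k)) (t : ℝ) :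
    Fin k → E d :=
  polygonalPath (5 * N) (pathVertex o u C r) t

theorem pathVertex_five_mul_add (C : ℕ → Fin k → E d) (r : ℕ → Setoid (Fin k)) (s : ℕ)
    {m : ℕ} (hm : m < 5) :
    pathVertex o u C r (5 * s + m) = legVertex o u (C s) (C (s + 1)) (r s) (r (s + 1)) m := by
  rw [pathVertex, show (5 * s + m) / 5 = s by omega, show (5 * s + m) % 5 = m by omega]

theorem pathVertex_five_mul (C : ℕ → Fin k → E d) (r : ℕ → Setoid (Fin k)) (s : ℕ) :
    pathVertex o u C r (5 * s) = C s :=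
  pathVertex_five_mul_add o u C r s (m := 0) (by norm_num)

theorem segmentInjective_pathVertex {o u : Fin d} (hou : o ≠ u) {C : ℕ → Fin k → E d}
    (hC : ∀ s, Injective (C s)) (q : ℕ) :
    SegmentInjective (pathVertex o u C (fun s => coordKer o (C s)) q)
      (pathVertex o u C (fun s => coordKer o (C s)) (q + 1)) := by
  obtain ⟨s, m, hm, rfl⟩ : ∃ s m, m < 5 ∧ q = 5 * s + m :=
    ⟨q / 5, q % 5, Nat.mod_lt q (by norm_num), (Nat.div_add_mod q 5).symm⟩
  have hv := fun m (hm : m < 5) =>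
    pathVertex_five_mul_add o u C (fun s => coordKer o (C s)) s hm
  interval_cases m
  · rw [hv 0 (by norm_num), show 5 * s + 0 + 1 = 5 * s + 1 from rfl, hv 1 (by norm_num)]
    exact segmentInjective_spread o (hC s)
  · rw [hv 1 (by norm_num), show 5 * s + 1 + 1 = 5 * s + 2 from rfl, hv 2 (by norm_num)]
    exact segmentInjective_lift u hou (injective_coord_spread o (C s))
  · rw [hv 2 (by norm_num), show 5 * s + 2 + 1 = 5 * s + 3 from rfl, hv 3 (by norm_num)]
    exact segmentInjective_lift_lift u _ _
  · rw [hv 3 (by norm_num), show 5 * s + 3 + 1 = 5 * s + 4 from rfl, hv 4 (by norm_num)]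
    exact (segmentInjective_lift u hou (injective_coord_spread o (C (s + 1)))).symm
  · rw [hv 4 (by norm_num), show 5 * s + 4 + 1 = 5 * (s + 1) by ring,
      pathVertex_five_mul]
    exact (segmentInjective_spread o (hC (s + 1))).symm

theorem configPath_natCast_div (N : ℕ) (C : ℕ → Fin k → E d) (r : ℕ → Setoid (Fin k))
    {i : ℕ} (hi : i ≤ N) : configPath o u N C r (i / N) = C i := by
  have ht : (i : ℝ) / N = ((5 * i : ℕ) : ℝ) / (5 * N : ℕ) := by
    push_cast
    rw [mul_div_mul_left _ _ (by norm_num : (5 : ℝ) ≠ 0)]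
  rw [configPath, ht, polygonalPath_natCast_div _ (by omega), pathVertex_five_mul]

theorem injective_configPath {o u : Fin d} (hou : o ≠ u) {N : ℕ} (hN : 0 < N)
    {C : ℕ → Fin k → E d} (hC : ∀ s, Injective (C s)) {t : ℝ} (ht : t ∈ Set.Icc 0 1) :
    Injective (configPath o u N C (fun s => coordKer o (C s)) t) :=
  injective_polygonalPath (by omega) (fun q _ => segmentInjective_pathVertex hou hC q) ht

theorem continuous_configPath (N : ℕ) (r : ℕ → Setoid (Fin k)) :
    Continuous fun p : (ℕ → Fin k → E d) × ℝ => configPath o u N p.1 r p.2 := by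
  refine continuous_polygonalPath (F := fun q C => pathVertex o u C r q) (5 * N) fun q => ?_
  unfold pathVertex
  have hspread := continuous_spread (k := k) o
  have hlift := continuous_lift (k := k) (d := d) u
  generalize q % 5 = m
  rcases m with _ | _ | _ | _ | m <;> simp only [legVertex] <;> fun_prop

end Path

theorem projL_eq_projL_iff (hd : 0 < d) {v w : E d} :
    projL v = projL w ↔ v ⟨0, hd⟩ = w ⟨0, hd⟩ := by
  constructor
  · intro h
    simpa [projL] using congrArg (fun z : E d => z ⟨0, hd⟩) h
  · intro h
    ext j
    by_cases hj : (j : ℕ) = 0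
    · simp [projL, show j = ⟨0, hd⟩ from Fin.ext hj, h]
    · simp [projL, hj]

theorem cp_eq_ncard_range_coord (hd : 0 < d) (x : Fin k → E d) :
    cp x = (Set.range fun i => x i ⟨0, hd⟩).ncard :=
  le_antisymm (FactorsThrough.ncard_range_le fun _ _ h => (projL_eq_projL_iff hd).2 h)
    (FactorsThrough.ncard_range_le fun _ _ h => (projL_eq_projL_iff hd).1 h)

theorem one_le_cp (hk : 0 < k) (x : Fin k → E d) : 1 ≤ cp x := by
  have : Nonempty (Fin k) := ⟨⟨0, hk⟩⟩
  exact (Set.ncard_pos (Set.finite_range _)).2 (Set.range_nonempty _)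

theorem cp_le (x : Fin k → E d) : cp x ≤ k := by
  rw [cp, ← Set.image_univ]
  exact (Set.ncard_image_le Set.finite_univ).trans (by simp)

theorem sum_cp_mem_Icc {n : ℕ} (hk : 0 < k) (C : Fin n → Conf d k) :
    ∑ s, cp (C s : Fin k → E d) ∈ Set.Icc n (n * k) := by
  constructor
  · simpa using Finset.card_nsmul_le_sum Finset.univ (fun s => cp (C s : Fin k → E d)) 1
      fun s _ => one_le_cp hk _
  · simpa [mul_comm] using Finset.sum_le_card_nsmul Finset.univ
      (fun s => cp (C s : Fin k → E d)) k fun s _ => cp_le _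

theorem Wset_eq {n : ℕ} (hk : 0 < k) (ℓ : ℕ) :
    Wset d k n ℓ = {C | ∑ s, cp (C s : Fin k → E d) = ℓ} := by
  ext C
  simp only [Wset, Aprod, Set.mem_iUnion, Set.mem_ofPred_eq]
  constructor
  · rintro ⟨jv, ⟨-, rfl⟩, hC⟩
    exact Finset.sum_congr rfl fun s _ => hC s
  · rintro rfl
    exact ⟨fun s => cp (C s : Fin k → E d), ⟨fun s => ⟨one_le_cp hk _, cp_le _⟩, rfl⟩,
      fun s => rfl⟩

theorem hasSec_sum_ncard_range_coord_eq {o u : Fin d} (hou : o ≠ u) {m : ℕ} (hm : 0 < m)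
    (ℓ : ℕ) : HasSec (m + 1) {C : Fin (m + 1) → Conf d k |
      ∑ s, (Set.range fun i => (C s : Fin k → E d) i o).ncard = ℓ} := by
  set S := {C : Fin (m + 1) → Conf d k |
    ∑ s, (Set.range fun i => (C s : Fin k → E d) i o).ncard = ℓ}
  have hpattern : IsLocallyConstant fun C : S => fun s => coordKer o (C.1 s : Fin k → E d) :=
    isLocallyConstant_ker_of_sum_ncard_range_eq
      (f := fun (C : Fin (m + 1) → Conf d k) s i => (C s : Fin k → E d) i o)
      (continuous_pi fun s => continuous_pi fun i => (EuclideanSpace.proj o).continuous.comp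
        ((continuous_apply i).comp (continuous_subtype_val.comp (continuous_apply s)))) ℓ
  -- `Fin.ofNat` wraps around, but only indices `s ≤ m` are visited by the path.
  let seq (C : S) (s : ℕ) : Fin k → E d := C.1 (Fin.ofNat (m + 1) s)
  have hseq : Continuous seq := continuous_pi fun _ =>
    continuous_subtype_val.comp ((continuous_apply _).comp continuous_subtype_val)
  let path (R : Fin (m + 1) → Setoid (Fin k)) (p : S × unitInterval) : Fin k → E d :=
    configPath o u m (seq p.1) (fun s => R (Fin.ofNat (m + 1) s)) p.2
  have hcont : Continuous fun p : S × unitInterval =>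
      path (fun s => coordKer o (p.1.1 s : Fin k → E d)) p :=
    (hpattern.comp_continuous continuous_fst).continuous_piecewise fun R =>
      (continuous_configPath o u m _).comp
        (f := fun p : S × unitInterval => (seq p.1, (p.2 : ℝ)))
        ((hseq.comp continuous_fst).prodMk (continuous_subtype_val.comp continuous_snd))
  have hinj : ∀ p : S × unitInterval,
      Injective (path (fun s => coordKer o (p.1.1 s : Fin k → E d)) p) :=
    fun p => injective_configPath hou hm (fun s => (p.1.1 (Fin.ofNat (m + 1) s)).2) p.2.2
  refine hasSec_of_continuous ⟨fun p => ⟨_, hinj p⟩, hcont.subtype_mk _⟩ fun C i => ?_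
  refine Subtype.ext ?_
  simp only [path, seq, ContinuousMap.coe_mk]
  rw [coe_eTime_succ, configPath_natCast_div o u m _ _ (Nat.lt_succ_iff.1 i.2),
    Fin.ofNat_val_eq_self]

end Conf

open Conf

/-- For d, k, n ≥ 2, the n(k-1)+1 sets W_ℓ = ⋃_{j_1+⋯+j_n=ℓ} A_{j_1} × ⋯ × A_{j_n},
ℓ = n,…,nk, are pairwise disjoint, cover F(ℝ^d,k)^n, and each admits a
continuous section of e_n : P(F(ℝ^d,k)) → F(ℝ^d,k)^n. -/
theorem stmt10 (d k n : ℕ) (hd : 2 ≤ d) (hk : 2 ≤ k) (hn : 2 ≤ n) :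
    (∀ ℓ ∈ Set.Icc n (n * k), ∀ ℓ' ∈ Set.Icc n (n * k), ℓ ≠ ℓ' →
      Disjoint (Wset d k n ℓ) (Wset d k n ℓ')) ∧
    (⋃ ℓ ∈ Set.Icc n (n * k), Wset d k n ℓ) = Set.univ ∧
    (∀ ℓ ∈ Set.Icc n (n * k), HasSec n (Wset d k n ℓ)) := by
  have hW : ∀ ℓ, Wset d k n ℓ = {C | ∑ s, cp (C s : Fin k → E d) = ℓ} :=
    Wset_eq (by omega)
  refine ⟨fun ℓ _ ℓ' _ hne => ?_, ?_, fun ℓ _ => ?_⟩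
  · rw [hW, hW]
    exact Set.disjoint_left.2 fun C h h' => hne (h.symm.trans h')
  · refine Set.eq_univ_of_forall fun C => Set.mem_biUnion (sum_cp_mem_Icc (by omega) C) ?_
    rw [hW]
    rfl
  · obtain ⟨m, rfl⟩ : ∃ m, n = m + 1 := ⟨n - 1, by omega⟩
    simp only [hW, cp_eq_ncard_range_coord (by omega : 0 < d)]
    exact hasSec_sum_ncard_range_coord_eq (u := ⟨1, hd⟩) (by simp [Fin.ext_iff]) (by omega) ℓ
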